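/- Assume h21/h22 ≤ b + b' and h11/h21 < √p2·(a+a')/(√p1·(b+b')). Then the supremum of f(w1,w2) over the interval-restricted feasible set D equals (h11/(a+a'))·W1, and it is attained at (w1,w2) = ( W1 , ((b+b')·h11/((a+a')·h21))·W1 ). -/

import Mathlib

/-- The minimum Euclidean half-distance at receiver 1: the minimum of
`|h11·w1·n − h21·w2·m|` over integer pairs `(m,n) ≠ (0,0)` with
`|m| ≤ M−1` and `|n| ≤ M−1`. -/
noncomputable def minDist1 (M : ℕ) (h11 h21 w1 w2 : ℝ) : ℝ :=
  sInf {d : ℝ | ∃ m n : ℤ, (m, n) ≠ (0, 0) ∧ |m| ≤ (M : ℤ) - 1 ∧ |n| ≤ (M : ℤ) - 1 ∧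
      d = |h11 * w1 * n - h21 * w2 * m|}

/-- The smaller of the two receivers minimum Euclidean half-distances. -/
noncomputable def f (M : ℕ) (h11 h21 h22 w1 w2 : ℝ) : ℝ :=
  min (minDist1 M h11 h21 w1 w2) (h22 * w2)

/-- `b/a < b'/a'` is a Farey pair of order `K` (numerators `b, b'`,
denominators `a, a'`): `a ≥ 1`, `b' ≥ 1`, the pairs are coprime, all entries
are at most `K`, `b·a' < b'·a`, and no coprime pair `(m,n)` of nonnegative
integers, not both zero, with `m ≤ K`, `n ≤ K` satisfies `b·m < n·a` and
`n·a' < b'·m`. -/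
def FareyPairOrd (K a b a2 b2 : ℕ) : Prop :=
  1 ≤ a ∧ 1 ≤ b2 ∧ Nat.Coprime a b ∧ Nat.Coprime a2 b2 ∧
  a ≤ K ∧ b ≤ K ∧ a2 ≤ K ∧ b2 ≤ K ∧ b * a2 < b2 * a ∧
  ¬∃ m n : ℕ, Nat.Coprime m n ∧ ¬(m = 0 ∧ n = 0) ∧ m ≤ K ∧ n ≤ K ∧
    b * m < n * a ∧ n * a2 < b2 * m

/-- The interval-restricted feasible set: `0 < w1 ≤ W1`, `0 < w2 ≤ W2`, and
`b/a < h21·w2/(h11·w1) ≤ b'/a'` in cross-multiplied form. -/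
def Feas (W1 W2 h11 h21 : ℝ) (a b a2 b2 : ℕ) (w1 w2 : ℝ) : Prop :=
  0 < w1 ∧ w1 ≤ W1 ∧ 0 < w2 ∧ w2 ≤ W2 ∧
  (b : ℝ) * h11 * w1 < (a : ℝ) * h21 * w2 ∧
  (a2 : ℝ) * h21 * w2 ≤ (b2 : ℝ) * h11 * w1

/-!
Write `x = h11 w1` and `y = h21 w2`. Farey neighbours satisfy `a b2 - a2 b = 1`, so on the
feasible set the two gaps `a y - b x` and `b2 x - a2 y`, each at least `minDist1`, recombine as
`a2 (a y - b x) + a (b2 x - a2 y) = x`; hence `f ≤ x / (a + a2) ≤ h11 W1 / (a + a2)`.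
At the mediant slope `y / x = (b + b2) / (a + a2)` every `x n - y m` is `x / (a + a2)` times the
integer `n (a + a2) - m (b + b2)`. The mediant is primitive and, as no fraction of the box lies
strictly between the neighbours, it leaves the box; so that integer never vanishes and
`minDist1 = x / (a + a2)`. The bound on `h21 / h22` makes `h22 w2` no smaller, and the bound on
`h11 / h21` keeps `w2 ≤ W2`.
-/

theorem exists_mul_eq_mul_add_one_of_coprime {a b : ℕ} (hco : a.Coprime b) (ha : a ≠ 0) :
    ∃ m < a, ∃ n, n * a = m * b + 1 := by
  obtain ⟨m, hm, hmod⟩ := Nat.exists_mul_mod_eq_of_coprime (a - 1) hco.symm ha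
  refine ⟨m, hm, b * m / a + 1, ?_⟩
  have hdiv := Nat.div_add_mod (b * m) a
  rw [hmod, Nat.mod_eq_of_lt (by omega)] at hdiv
  rw [add_mul, one_mul, mul_comm (b * m / a), mul_comm m b]
  omega

theorem exists_mul_eq_mul_add_one_of_le {K a b : ℕ} (hco : a.Coprime b) (ha : 0 < a)
    (haK : a ≤ K) (hbK : b ≤ K) :
    ∃ m n : ℕ, m ≤ K ∧ n ≤ K ∧ n * a = m * b + 1 ∧ (K < m + a ∨ K < n + b) := by
  obtain ⟨m₀, hm₀, n₀, h₀⟩ := exists_mul_eq_mul_add_one_of_coprime hco ha.ne'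
  have hn₀ : n₀ ≤ K := by
    by_contra! h
    nlinarith [Nat.mul_le_mul (Nat.le_pred_of_lt hm₀) hbK]
  let S := (Finset.range (K + 1) ×ˢ Finset.range (K + 1)).filter
    fun p : ℕ × ℕ => p.2 * a = p.1 * b + 1
  obtain ⟨⟨m, n⟩, hmem, hmax⟩ := S.exists_max_image Prod.fst
    ⟨(m₀, n₀), by simp only [S, Finset.mem_filter, Finset.mem_product, Finset.mem_range]; omega⟩
  simp only [S, Finset.mem_filter, Finset.mem_product, Finset.mem_range] at hmem hmax
  refine ⟨m, n, by omega, by omega, hmem.2, ?_⟩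
  by_contra! h
  have := hmax (m + a, n + b) ⟨⟨by omega, by omega⟩, by rw [add_mul, add_mul, hmem.2]; ring⟩
  omega

theorem Nat.coprime_of_mul_eq_mul_add_one {m n a b : ℕ} (h : n * a = m * b + 1) :
    m.Coprime n := by
  have hZ : (n : ℤ) * a = m * b + 1 := by exact_mod_cast h
  exact Nat.isCoprime_iff_coprime.mp ⟨-b, a, by linear_combination hZ⟩

namespace FareyPairOrd

variable {K a b a2 b2 : ℕ}

/-- Solve `n a - m b = 1` in the box with `(m + a, n + b)` outside it. Then
`(a2, b2) = e • (a, b) + det • (m, n)` with `e = n a2 - b2 m`: `e < 0` puts `n / m` strictly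
between the neighbours, `e > 0` pushes `(a2, b2)` out of the box, and `e = 0` makes `det` a
common divisor of `a2` and `b2`. -/
theorem det_eq_one (h : FareyPairOrd K a b a2 b2) : a * b2 = a2 * b + 1 := by
  obtain ⟨ha, hb2, hab, hab2, haK, hbK, ha2K, hb2K, hlt, hnone⟩ := h
  obtain ⟨m, n, hmK, hnK, hmn, hout⟩ := exists_mul_eq_mul_add_one_of_le hab ha haK hbK
  obtain ⟨d, hd⟩ := Nat.exists_eq_add_of_lt hlt
  have hmnZ : (n : ℤ) * a = m * b + 1 := by exact_mod_cast hmn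
  have hdZ : (b2 : ℤ) * a = b * a2 + d + 1 := by exact_mod_cast hd
  have ha2_eq : (a2 : ℤ) = a * (n * a2 - b2 * m) + m * (d + 1) := by
    linear_combination (-(a2 : ℤ)) * hmnZ + m * hdZ
  have hb2_eq : (b2 : ℤ) = b * (n * a2 - b2 * m) + n * (d + 1) := by
    linear_combination (-(b2 : ℤ)) * hmnZ + n * hdZ
  rcases lt_trichotomy (n * a2) (b2 * m) with hbelow | hon | habove
  · refine absurd ⟨m, n, Nat.coprime_of_mul_eq_mul_add_one hmn, ?_, hmK, hnK, ?_, hbelow⟩ hnone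
    · rintro ⟨-, rfl⟩
      simp at hmn
    · rw [mul_comm b m, hmn]
      omega
  · have hon' : (n : ℤ) * a2 - b2 * m = 0 := by rw [sub_eq_zero]; exact_mod_cast hon
    rw [hon', mul_zero, zero_add] at ha2_eq hb2_eq
    have hd1 : d + 1 = 1 := Nat.eq_one_of_dvd_coprimes hab2
      (Dvd.intro_left m (by exact_mod_cast ha2_eq.symm))
      (Dvd.intro_left n (by exact_mod_cast hb2_eq.symm))
    rw [mul_comm, hd, mul_comm b]
    omega
  · have he : (1 : ℤ) ≤ n * a2 - b2 * m := by
      have : (b2 : ℤ) * m < n * a2 := by exact_mod_cast habove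
      linarith
    rcases hout with hK | hK
    · nlinarith
    · nlinarith

theorem mediant_coprime (h : FareyPairOrd K a b a2 b2) : (a + a2).Coprime (b + b2) :=
  Nat.coprime_of_mul_eq_mul_add_one (a := a) (b := b) (by nlinarith [h.det_eq_one])

theorem lt_add_or_lt_add (h : FareyPairOrd K a b a2 b2) : K < a + a2 ∨ K < b + b2 := by
  have hdet := h.det_eq_one
  have hco := h.mediant_coprime
  obtain ⟨ha, -, -, -, -, -, -, -, -, hnone⟩ := h
  by_contra! hle
  exact hnone ⟨a + a2, b + b2, hco, by omega, hle.1, hle.2, by nlinarith, by nlinarith⟩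

end FareyPairOrd

theorem mul_ne_mul_of_coprime_of_abs_le {K A B : ℕ} (hA : 0 < A) (hco : A.Coprime B)
    (hout : K < A ∨ K < B) {m n : ℤ} (hmn : (m, n) ≠ (0, 0)) (hm : |m| ≤ K) (hn : |n| ≤ K) :
    n * A ≠ m * B := by
  intro h
  obtain ⟨t, rfl⟩ : (A : ℤ) ∣ m :=
    (Nat.isCoprime_iff_coprime.mpr hco).dvd_of_dvd_mul_right ⟨n, by rw [← h, mul_comm]⟩
  obtain rfl : n = t * B :=
    mul_right_cancel₀ (by exact_mod_cast hA.ne' : (A : ℤ) ≠ 0) (by rw [h]; ring)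
  have ht : 1 ≤ |t| := Int.one_le_abs fun ht => hmn (by simp [ht])
  rw [abs_mul, Nat.abs_cast] at hm hn
  rcases hout with hK | hK
  · nlinarith
  · nlinarith

theorem div_le_abs_sub_of_mul_eq_mul {A B : ℕ} (hA : 0 < A) {x y : ℝ} (hx : 0 ≤ x)
    (hxy : y * A = x * B) {m n : ℤ} (hne : n * A ≠ m * B) :
    x / A ≤ |x * n - y * m| := by
  have hAR : (0 : ℝ) < A := by exact_mod_cast hA
  have hint : (1 : ℝ) ≤ |((n * A - m * B : ℤ) : ℝ)| := by
    exact_mod_cast Int.one_le_abs (sub_ne_zero.mpr hne)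
  have hrepr : x * n - y * m = x / A * ((n * A - m * B : ℤ) : ℝ) := by
    push_cast
    field_simp
    linear_combination (-(m : ℝ)) * hxy
  rw [hrepr, abs_mul, abs_of_nonneg (by positivity)]
  exact le_mul_of_one_le_right (by positivity) hint

theorem mediant_gaps {a b a2 b2 : ℕ} (hdet : a * b2 = a2 * b + 1) {x y : ℝ}
    (hxy : y * (a + a2) = x * (b + b2)) :
    (a * y - b * x) * (a + a2) = x ∧ (b2 * x - a2 * y) * (a + a2) = x := by
  have hdetR : (a : ℝ) * b2 = a2 * b + 1 := by exact_mod_cast hdet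
  constructor
  · linear_combination a * hxy + x * hdetR
  · linear_combination (-(a2 : ℝ)) * hxy + x * hdetR

theorem feas_of_mediant_slope {a b a2 b2 : ℕ} (hdet : a * b2 = a2 * b + 1)
    {h11 h21 W1 W2 w2 : ℝ} (hx : 0 < h11 * W1) (hW1 : 0 < W1) (hw2 : 0 < w2) (hw2W : w2 ≤ W2)
    (hslope : h21 * w2 * (a + a2) = h11 * W1 * (b + b2)) :
    Feas W1 W2 h11 h21 a b a2 b2 W1 w2 := by
  have hA : (0 : ℝ) < a + a2 := by
    have : a ≠ 0 := by rintro rfl; simp at hdet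
    positivity
  obtain ⟨hlo, hhi⟩ := mediant_gaps hdet hslope
  exact ⟨hW1, le_rfl, hw2, hw2W, by nlinarith, by nlinarith⟩

section minDist1

variable {M : ℕ} {h11 h21 w1 w2 : ℝ}

theorem minDist1_le {m n : ℤ} (hmn : (m, n) ≠ (0, 0)) (hm : |m| ≤ (M : ℤ) - 1)
    (hn : |n| ≤ (M : ℤ) - 1) : minDist1 M h11 h21 w1 w2 ≤ |h11 * w1 * n - h21 * w2 * m| :=
  csInf_le ⟨0, by rintro _ ⟨_, _, _, _, _, rfl⟩; positivity⟩ ⟨m, n, hmn, hm, hn, rfl⟩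

theorem minDist1_le_natCast {m n : ℕ} (hmn : m ≠ 0 ∨ n ≠ 0) (hm : m ≤ M - 1)
    (hn : n ≤ M - 1) : minDist1 M h11 h21 w1 w2 ≤ |h11 * w1 * n - h21 * w2 * m| := by
  exact_mod_cast minDist1_le (m := m) (n := n) (by rcases hmn with h | h <;> simp [h])
    (by simp; omega) (by simp; omega)

theorem minDist1_le_div_of_between {a b a2 b2 : ℕ} (hdet : a * b2 = a2 * b + 1)
    (haM : a ≤ M - 1) (hbM : b ≤ M - 1) (ha2M : a2 ≤ M - 1) (hb2M : b2 ≤ M - 1)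
    (hlo : b * h11 * w1 ≤ a * h21 * w2) (hhi : a2 * h21 * w2 ≤ b2 * h11 * w1) :
    minDist1 M h11 h21 w1 w2 ≤ h11 * w1 / (a + a2) := by
  have ha : a ≠ 0 := by rintro rfl; simp at hdet
  have hb2 : b2 ≠ 0 := by rintro rfl; simp at hdet
  have hdetR : (a : ℝ) * b2 = a2 * b + 1 := by exact_mod_cast hdet
  have h₁ : minDist1 M h11 h21 w1 w2 ≤ |h11 * w1 * b - h21 * w2 * a| :=
    minDist1_le_natCast (Or.inl ha) haM hbM
  have h₂ : minDist1 M h11 h21 w1 w2 ≤ |h11 * w1 * b2 - h21 * w2 * a2| :=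
    minDist1_le_natCast (Or.inr hb2) ha2M hb2M
  rw [abs_sub_comm, abs_of_nonneg (by linarith)] at h₁
  rw [abs_of_nonneg (by linarith)] at h₂
  rw [le_div_iff₀ (by positivity)]
  calc minDist1 M h11 h21 w1 w2 * (a + a2)
      = a2 * minDist1 M h11 h21 w1 w2 + a * minDist1 M h11 h21 w1 w2 := by ring
    _ ≤ a2 * (h21 * w2 * a - h11 * w1 * b) + a * (h11 * w1 * b2 - h21 * w2 * a2) := by gcongr
    _ = h11 * w1 := by linear_combination h11 * w1 * hdetR

namespace FareyPairOrd

variable {a b a2 b2 : ℕ}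

theorem minDist1_eq_of_mediant_slope (h : FareyPairOrd (M - 1) a b a2 b2) (hx : 0 ≤ h11 * w1)
    (hslope : h21 * w2 * (a + a2) = h11 * w1 * (b + b2)) :
    minDist1 M h11 h21 w1 w2 = h11 * w1 / (a + a2) := by
  have hdet := h.det_eq_one
  have hco := h.mediant_coprime
  have hout := h.lt_add_or_lt_add
  obtain ⟨ha, -, -, -, haM, hbM, ha2M, hb2M, -, -⟩ := h
  have hgaps := mediant_gaps hdet hslope
  have hA : (0 : ℝ) < a + a2 := by positivity
  refine le_antisymm (minDist1_le_div_of_between hdet haM hbM ha2M hb2M ?_ ?_) ?_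
  · nlinarith [hgaps.1]
  · nlinarith [hgaps.2]
  refine le_csInf ⟨_, 1, 0, by simp, by simp; omega, by simp; omega, rfl⟩ ?_
  rintro _ ⟨m, n, hmn, hm, hn, rfl⟩
  have hbox : ((M - 1 : ℕ) : ℤ) = M - 1 := by omega
  exact_mod_cast div_le_abs_sub_of_mul_eq_mul (by omega) hx (y := h21 * w2)
    (by push_cast; exact hslope)
    (mul_ne_mul_of_coprime_of_abs_le (by omega) hco hout hmn (hbox ▸ hm) (hbox ▸ hn))

theorem f_le_of_feas {h22 W1 W2 : ℝ} (h : FareyPairOrd (M - 1) a b a2 b2) (h11p : 0 ≤ h11)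
    (hf : Feas W1 W2 h11 h21 a b a2 b2 w1 w2) :
    f M h11 h21 h22 w1 w2 ≤ h11 / (a + a2) * W1 := by
  obtain ⟨-, hw1W, -, -, hlo, hhi⟩ := hf
  have hdet := h.det_eq_one
  obtain ⟨-, -, -, -, haM, hbM, ha2M, hb2M, -, -⟩ := h
  calc f M h11 h21 h22 w1 w2 ≤ minDist1 M h11 h21 w1 w2 := min_le_left _ _
    _ ≤ h11 * w1 / (a + a2) :=
      minDist1_le_div_of_between hdet haM hbM ha2M hb2M hlo.le hhi
    _ ≤ h11 / (a + a2) * W1 := by rw [mul_div_right_comm]; gcongr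

theorem f_eq_of_mediant_slope {h22 : ℝ} (h : FareyPairOrd (M - 1) a b a2 b2) (hx : 0 ≤ h11 * w1)
    (h21p : 0 < h21) (h22p : 0 < h22) (hcross : h21 / h22 ≤ b + b2)
    (hslope : h21 * w2 * (a + a2) = h11 * w1 * (b + b2)) :
    f M h11 h21 h22 w1 w2 = h11 * w1 / (a + a2) := by
  have hA : (0 : ℝ) < a + a2 := by have := h.1; positivity
  rw [f, h.minDist1_eq_of_mediant_slope hx hslope, min_eq_left]
  rw [div_le_iff₀ hA]
  refine le_of_mul_le_mul_left ?_ h21p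
  calc h21 * (h11 * w1) ≤ (b + b2) * h22 * (h11 * w1) := by
        gcongr
        exact (div_le_iff₀ h22p).mp hcross
    _ = h21 * (h22 * w2 * (a + a2)) := by linear_combination (-h22) * hslope

end FareyPairOrd

end minDist1

theorem lemma1_case1b_general (M : ℕ)
    (h11 h21 h22 p1 p2 : ℝ)
    (h11p : 0 < h11) (h21p : 0 < h21) (h22p : 0 < h22)
    (hp1 : 0 < p1)
    (a b a2 b2 : ℕ) (hfp : FareyPairOrd (M - 1) a b a2 b2)
    (W1 W2 : ℝ)
    (hW1 : W1 = Real.sqrt (3 * p1 / ((M : ℝ) ^ 2 - 1)))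
    (hW2 : W2 = Real.sqrt (3 * p2 / ((M : ℝ) ^ 2 - 1)))
    (hcross : h21 / h22 ≤ (b : ℝ) + b2)
    (hratio : h11 / h21 <
        Real.sqrt p2 * ((a : ℝ) + a2) / (Real.sqrt p1 * ((b : ℝ) + b2))) :
    IsGreatest {v : ℝ | ∃ w1 w2 : ℝ, Feas W1 W2 h11 h21 a b a2 b2 w1 w2 ∧
        v = f M h11 h21 h22 w1 w2} (h11 / ((a : ℝ) + a2) * W1) ∧
    Feas W1 W2 h11 h21 a b a2 b2
      W1 ((((b : ℝ) + b2) * h11 / (((a : ℝ) + a2) * h21)) * W1) ∧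
    f M h11 h21 h22 W1 ((((b : ℝ) + b2) * h11 / (((a : ℝ) + a2) * h21)) * W1) =
      h11 / ((a : ℝ) + a2) * W1 := by
  have ⟨ha, hb2, _, _, haM, _⟩ := hfp
  have hA : (0 : ℝ) < a + a2 := by positivity
  have hB : (0 : ℝ) < b + b2 := by positivity
  have hq : 0 < 3 / ((M : ℝ) ^ 2 - 1) := by
    have : (2 : ℝ) ≤ M := by exact_mod_cast (by omega : 2 ≤ M)
    exact div_pos three_pos (by nlinarith)
  set s := √(3 / ((M : ℝ) ^ 2 - 1))
  have hs : 0 < s := Real.sqrt_pos.mpr hq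
  have hW1s : W1 = √p1 * s := by rw [hW1, ← Real.sqrt_mul' _ hq.le, mul_div_assoc']; ring_nf
  have hW2s : W2 = √p2 * s := by rw [hW2, ← Real.sqrt_mul' _ hq.le, mul_div_assoc']; ring_nf
  have hW1pos : 0 < W1 := hW1s ▸ mul_pos (Real.sqrt_pos.mpr hp1) hs
  set w2 := (b + b2) * h11 / ((a + a2) * h21) * W1 with hw2
  have hslope : h21 * w2 * (a + a2) = h11 * W1 * (b + b2) := by
    rw [hw2]
    field_simp
  have hw2W2 : w2 ≤ W2 := by
    have hratio' : h11 * (√p1 * (b + b2)) < √p2 * (a + a2) * h21 :=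
      (div_lt_div_iff₀ h21p (by positivity)).mp hratio
    rw [hw2, hW1s, hW2s, div_mul_eq_mul_div, div_le_iff₀ (by positivity)]
    nlinarith [mul_lt_mul_of_pos_right hratio' hs]
  have hfeas : Feas W1 W2 h11 h21 a b a2 b2 W1 w2 :=
    feas_of_mediant_slope hfp.det_eq_one (by positivity) hW1pos (by positivity) hw2W2 hslope
  have hval : f M h11 h21 h22 W1 w2 = h11 / (a + a2) * W1 := by
    rw [hfp.f_eq_of_mediant_slope (by positivity) h21p h22p hcross hslope, mul_div_right_comm]
  refine ⟨⟨⟨W1, w2, hfeas, hval.symm⟩, ?_⟩, hfeas, hval⟩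
  rintro _ ⟨w1, w2', hf, rfl⟩
  exact hfp.f_le_of_feas h11p.le hf

/-- Lemma 1, case 1(b): weak-cross-link subcase with small direct-link ratio. -/
theorem lemma1_case1b (M : ℕ) (hM : 2 ≤ M) (hMe : Even M)
    (h11 h21 h22 p1 p2 : ℝ)
    (h11p : 0 < h11) (h21p : 0 < h21) (h22p : 0 < h22)
    (hp1 : 0 < p1) (hp2 : 0 < p2)
    (a b a2 b2 : ℕ) (hfp : FareyPairOrd (M - 1) a b a2 b2)
    (W1 W2 : ℝ)
    (hW1 : W1 = Real.sqrt (3 * p1 / ((M : ℝ) ^ 2 - 1)))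
    (hW2 : W2 = Real.sqrt (3 * p2 / ((M : ℝ) ^ 2 - 1)))
    (hcross : h21 / h22 ≤ (b : ℝ) + b2)
    (hratio : h11 / h21 <
        Real.sqrt p2 * ((a : ℝ) + a2) / (Real.sqrt p1 * ((b : ℝ) + b2))) :
    IsGreatest {v : ℝ | ∃ w1 w2 : ℝ, Feas W1 W2 h11 h21 a b a2 b2 w1 w2 ∧
        v = f M h11 h21 h22 w1 w2} (h11 / ((a : ℝ) + a2) * W1) ∧
    Feas W1 W2 h11 h21 a b a2 b2
      W1 ((((b : ℝ) + b2) * h11 / (((a : ℝ) + a2) * h21)) * W1) ∧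
    f M h11 h21 h22 W1 ((((b : ℝ) + b2) * h11 / (((a : ℝ) + a2) * h21)) * W1) =
      h11 / ((a : ℝ) + a2) * W1 :=
  lemma1_case1b_general M h11 h21 h22 p1 p2 h11p h21p h22p hp1 a b a2 b2 hfp W1 W2 hW1 hW2 hcross
    hratio
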